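/- arXiv:2208.11297 — 2 statements merged into one kernel-verified Lean document; each statement's English description precedes it below -/
import Mathlib

section
/- (LLN for the rescaled Laguerre polynomial.) Fix d ≥ 1 and let p(x) := d!·(−d)^{−d}·L_{0,d}(dx) = x^d + Σ_{j=1}^{d} (−1)^j binom(d,j) (d!/((d−j)!·d^j)) x^{d−j}, where L_{0,d} is the Laguerre polynomial L_{α,d}(x) = Σ_{i=0}^d ((−x)^i/i!) binom(d+α, d−i) with α = 0. Then p is monic of degree d with only positive real roots (root multiset Λ), ẽ_j(Λ) = d!/((d−j)!·d^j) for 1 ≤ j ≤ d, and if λ_1^(n) ≥ ... ≥ λ_d^(n) denote the nonnegative real roots of p^{⊠_d n}, then lim_{n→∞} (λ_i^(n))^{1/n} = (d−i+1)/d for every 1 ≤ i ≤ d. -/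
/-!
The normalized coefficients `ẽ_j` are multiplicative under `⊠_d`, so the roots of `p^{⊠_d n}`
have `ẽ_j = a_j ^ n` with `a_j = d! / ((d - j)! d^j)`. For nonnegative roots
`λ_1 ≥ ⋯ ≥ λ_d`, the product `P_j = λ_1 ⋯ λ_j` is the largest of the `binom(d,j)` terms of
`e_j`, so `a_j ^ n ≤ P_j ≤ binom(d,j) a_j ^ n` and `P_j ^ (1/n) → a_j`. Hence
`λ_i ^ (1/n) = (P_i / P_{i-1}) ^ (1/n) → a_i / a_{i-1} = (d - i + 1) / d`.
-/

open Polynomial Filter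

/-- Finite free multiplicative convolution of two polynomials of degree `d`:
for `p(x) = Σ (-1)^i p_i x^{d-i}` and `q(x) = Σ (-1)^i q_i x^{d-i}`,
`(p ⊠_d q)(x) = Σ (-1)^i (p_i q_i / binom(d,i)) x^{d-i}`. -/
noncomputable def ffmul (d : ℕ) (p q : Polynomial ℝ) : Polynomial ℝ :=
  ∑ i ∈ Finset.range (d + 1),
    Polynomial.C ((-1 : ℝ) ^ i * p.coeff (d - i) * q.coeff (d - i) / (d.choose i : ℝ)) *
      Polynomial.X ^ (d - i)

/-- `ffmulPow d p n` is the `n`-th finite free multiplicative convolution power `p^{⊠_d n}`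
(for `n ≥ 1`); the convolution identity `(x-1)^d` is used as the 0-th power. -/
noncomputable def ffmulPow (d : ℕ) (p : Polynomial ℝ) : ℕ → Polynomial ℝ
  | 0 => (Polynomial.X - 1) ^ d
  | n + 1 => ffmul d p (ffmulPow d p n)

/-- Normalized elementary symmetric function `ẽ_i(Λ) = e_i(Λ) / binom(d,i)`. -/
noncomputable def etilde (d i : ℕ) (Λ : Multiset ℝ) : ℝ :=
  Λ.esymm i / (d.choose i : ℝ)

/-- The Laguerre polynomial `L_{0,d}(x) = Σ_{i=0}^d ((−x)^i/i!) binom(d, d−i)`. -/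
noncomputable def laguerre0 (d : ℕ) : Polynomial ℝ :=
  ∑ i ∈ Finset.range (d + 1),
    Polynomial.C ((-1 : ℝ) ^ i / (i.factorial : ℝ) * (d.choose (d - i) : ℝ)) *
      Polynomial.X ^ i

open Finset Topology

section NormalizedCoeffs

variable {d : ℕ} {p q : ℝ[X]} {a b : ℕ → ℝ}

theorem coeff_sum_C_mul_X_pow_sub {R : Type*} [Semiring R] (c : ℕ → R) {j : ℕ} (hj : j ≤ d) :
    (∑ i ∈ range (d + 1), C (c i) * X ^ (d - i)).coeff (d - j) = c j := by
  rw [finsetSum_coeff, sum_eq_single j]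
  · simp
  · intro i hi hij
    rw [coeff_C_mul_X_pow, if_neg (by rw [mem_range] at hi; omega)]
  · intro hj'
    exact absurd (mem_range.2 (by omega)) hj'

theorem X_pow_add_sum_Icc_eq_sum_range {R : Type*} [Semiring R] (c : ℕ → R) (hc : c 0 = 1) :
    X ^ d + ∑ i ∈ Icc 1 d, C (c i) * X ^ (d - i) = ∑ i ∈ range (d + 1), C (c i) * X ^ (d - i) := by
  rw [sum_range_eq_add_Ico _ (by omega : 0 < d + 1), Ico_add_one_right_eq_Icc, hc, C_1, one_mul,
    Nat.sub_zero]

/-- `a j` is the normalized coefficient `ẽ_j` of `p` read as a polynomial of degree `d`;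
for `p` monic with roots `Λ` this is `ẽ_j(Λ)` (Vieta). -/
def HasNormalizedCoeffs (d : ℕ) (p : ℝ[X]) (a : ℕ → ℝ) : Prop :=
  ∀ j ≤ d, p.coeff (d - j) = (-1) ^ j * d.choose j * a j

theorem HasNormalizedCoeffs.unique (ha : HasNormalizedCoeffs d p a)
    (hb : HasNormalizedCoeffs d p b) {j : ℕ} (hj : j ≤ d) : a j = b j := by
  have h := (ha j hj).symm.trans (hb j hj)
  have hc : (-1 : ℝ) ^ j * d.choose j ≠ 0 := by
    have := Nat.choose_ne_zero hj
    positivity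
  exact mul_left_cancel₀ hc h

theorem HasNormalizedCoeffs.ffmul (hp : HasNormalizedCoeffs d p a)
    (hq : HasNormalizedCoeffs d q b) : HasNormalizedCoeffs d (ffmul d p q) (a * b) := by
  intro j hj
  rw [_root_.ffmul, coeff_sum_C_mul_X_pow_sub _ hj, hp j hj, hq j hj, Pi.mul_apply]
  have hc : (d.choose j : ℝ) ≠ 0 := by exact_mod_cast Nat.choose_ne_zero hj
  have hsq : ((-1 : ℝ) ^ j) ^ 2 = 1 := by rw [← pow_mul, pow_mul', neg_one_sq, one_pow]
  field_simp
  linear_combination a j * b j * hsq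

theorem hasNormalizedCoeffs_X_sub_one_pow (d : ℕ) :
    HasNormalizedCoeffs d ((X - 1) ^ d) 1 := by
  intro j hj
  rw [sub_eq_add_neg, ← C_1, ← C_neg, coeff_X_add_C_pow, Nat.sub_sub_self hj,
    Nat.choose_symm hj, Pi.one_apply]
  ring

theorem HasNormalizedCoeffs.ffmulPow (hp : HasNormalizedCoeffs d p a) (n : ℕ) :
    HasNormalizedCoeffs d (ffmulPow d p n) (a ^ n) := by
  induction n with
  | zero => simpa only [pow_zero, _root_.ffmulPow] using hasNormalizedCoeffs_X_sub_one_pow d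
  | succ n ih => simpa only [pow_succ', _root_.ffmulPow] using hp.ffmul ih

theorem hasNormalizedCoeffs_multiset_prod_X_sub_C (s : Multiset ℝ) :
    HasNormalizedCoeffs (Multiset.card s) (s.map fun r => X - C r).prod
      (fun j => etilde (Multiset.card s) j s) := by
  intro j hj
  have hc : ((Multiset.card s).choose j : ℝ) ≠ 0 := by exact_mod_cast Nat.choose_ne_zero hj
  dsimp only
  rw [Multiset.prod_X_sub_C_coeff s (Nat.sub_le _ _), Nat.sub_sub_self hj, etilde,
    mul_assoc, mul_div_cancel₀ _ hc]

theorem hasNormalizedCoeffs_prod_X_sub_C {ι : Type*} (s : Finset ι) (f : ι → ℝ) :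
    HasNormalizedCoeffs #s (∏ i ∈ s, (X - C (f i))) (fun j => etilde #s j (s.val.map f)) := by
  simpa [Multiset.map_map, Function.comp_def] using
    hasNormalizedCoeffs_multiset_prod_X_sub_C (s.val.map f)

end NormalizedCoeffs

section Sandwich

variable {d j : ℕ} {g : ℕ → ℝ}

/-- Exchange argument: the elements of `t` outside `Icc 1 #t` are all larger than those of
`Icc 1 #t` missing from `t`, and there are equally many of each. -/
theorem prod_le_prod_Icc_card (hg : AntitoneOn g (Set.Icc 1 d))
    (hg₀ : ∀ k ∈ Set.Icc 1 d, 0 ≤ g k) {t : Finset ℕ} (ht : t ⊆ Icc 1 d) :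
    ∏ k ∈ t, g k ≤ ∏ k ∈ Icc 1 #t, g k := by
  rcases t.eq_empty_or_nonempty with rfl | ht₀
  · simp
  set I := Icc 1 #t
  have hmem : ∀ {k}, k ∈ t → k ∈ Set.Icc 1 d := fun hk => by simpa using ht hk
  have hcard : 1 ≤ #t ∧ #t ≤ d := ⟨ht₀.card_pos, by simpa using card_le_card ht⟩
  have hI : ∀ {k}, k ∈ I → k ∈ Set.Icc 1 d := fun hk => by
    rw [mem_Icc] at hk; exact ⟨hk.1, hk.2.trans hcard.2⟩
  have hc : #t ∈ Set.Icc 1 d := hcard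
  rw [← prod_inter_mul_prod_sdiff t I, ← prod_inter_mul_prod_sdiff I t, inter_comm]
  refine mul_le_mul_of_nonneg_left ?_ (prod_nonneg fun k hk => hg₀ k (hI (mem_inter.1 hk).1))
  calc ∏ k ∈ t \ I, g k ≤ ∏ _k ∈ t \ I, g #t := by
        refine prod_le_prod (fun k hk => hg₀ k (hmem (mem_sdiff.1 hk).1)) fun k hk => ?_
        obtain ⟨hkt, hkI⟩ := mem_sdiff.1 hk
        exact hg hc (hmem hkt) (by simp [I, mem_Icc, (hmem hkt).1] at hkI; omega)
    _ = ∏ _k ∈ I \ t, g #t := by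
        rw [prod_const, prod_const, card_sdiff_comm (by simp [I])]
    _ ≤ ∏ k ∈ I \ t, g k := by
        refine prod_le_prod (fun _ _ => hg₀ _ hc) fun k hk => ?_
        exact hg (hI (mem_sdiff.1 hk).1) hc (mem_Icc.1 (mem_sdiff.1 hk).1).2

theorem prod_Icc_le_esymm (hg₀ : ∀ k ∈ Set.Icc 1 d, 0 ≤ g k) (hj : j ≤ d) :
    ∏ k ∈ Icc 1 j, g k ≤ ((Icc 1 d).val.map g).esymm j := by
  rw [esymm_map_val]
  refine single_le_sum (f := fun t => ∏ k ∈ t, g k) (fun t ht => prod_nonneg fun k hk => ?_) ?_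
  · exact hg₀ k (by simpa using (mem_powersetCard.1 ht).1 hk)
  · exact mem_powersetCard.2 ⟨Icc_subset_Icc_right hj, by simp⟩

theorem esymm_le_choose_mul_prod_Icc (hg : AntitoneOn g (Set.Icc 1 d))
    (hg₀ : ∀ k ∈ Set.Icc 1 d, 0 ≤ g k) :
    ((Icc 1 d).val.map g).esymm j ≤ d.choose j * ∏ k ∈ Icc 1 j, g k := by
  rw [esymm_map_val]
  calc ∑ t ∈ (Icc 1 d).powersetCard j, ∏ k ∈ t, g k
      ≤ ∑ _t ∈ (Icc 1 d).powersetCard j, ∏ k ∈ Icc 1 j, g k := by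
        refine sum_le_sum fun t ht => ?_
        obtain ⟨hts, htj⟩ := mem_powersetCard.1 ht
        simpa [htj] using prod_le_prod_Icc_card hg hg₀ hts
    _ = d.choose j * ∏ k ∈ Icc 1 j, g k := by simp

theorem etilde_le_prod_Icc (hg : AntitoneOn g (Set.Icc 1 d))
    (hg₀ : ∀ k ∈ Set.Icc 1 d, 0 ≤ g k) (hj : j ≤ d) :
    etilde d j ((Icc 1 d).val.map g) ≤ ∏ k ∈ Icc 1 j, g k := by
  have hc : (0 : ℝ) < d.choose j := by exact_mod_cast Nat.choose_pos hj
  rw [etilde, div_le_iff₀' hc]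
  exact esymm_le_choose_mul_prod_Icc hg hg₀

theorem prod_Icc_le_choose_mul_etilde (hg₀ : ∀ k ∈ Set.Icc 1 d, 0 ≤ g k) (hj : j ≤ d) :
    ∏ k ∈ Icc 1 j, g k ≤ d.choose j * etilde d j ((Icc 1 d).val.map g) := by
  have hc : (d.choose j : ℝ) ≠ 0 := by exact_mod_cast Nat.choose_ne_zero hj
  rw [etilde, mul_div_cancel₀ _ hc]
  exact prod_Icc_le_esymm hg₀ hj

end Sandwich

section Limits

theorem tendsto_rpow_one_div_of_pow_le_of_le_mul_pow {x : ℕ → ℝ} {a K : ℝ} (ha : 0 < a)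
    (hK : 0 < K) (hlow : ∀ᶠ n in atTop, a ^ n ≤ x n) (hup : ∀ᶠ n in atTop, x n ≤ K * a ^ n) :
    Tendsto (fun n : ℕ => x n ^ (1 / (n : ℝ))) atTop (𝓝 a) := by
  have hK' : Tendsto (fun n : ℕ => K ^ (1 / (n : ℝ)) * a) atTop (𝓝 a) := by
    simpa using ((tendsto_const_nhds (x := K)).rpow tendsto_one_div_atTop_nhds_zero_nat
      (Or.inl hK.ne')).mul_const a
  refine tendsto_of_tendsto_of_tendsto_of_le_of_le' tendsto_const_nhds hK' ?_ ?_
  · filter_upwards [hlow, eventually_ne_atTop 0] with n hn hn₀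
    calc a = (a ^ n) ^ (1 / (n : ℝ)) := by rw [one_div, Real.pow_rpow_inv_natCast ha.le hn₀]
      _ ≤ x n ^ (1 / (n : ℝ)) := by gcongr
  · filter_upwards [hlow, hup, eventually_ne_atTop 0] with n hlo hn hn₀
    calc x n ^ (1 / (n : ℝ)) ≤ (K * a ^ n) ^ (1 / (n : ℝ)) := by
          gcongr
          exact (pow_pos ha n).le.trans hlo
      _ = K ^ (1 / (n : ℝ)) * a := by
          rw [Real.mul_rpow hK.le (by positivity), one_div, Real.pow_rpow_inv_natCast ha.le hn₀]

variable {d : ℕ} {g : ℕ → ℕ → ℝ} {a : ℕ → ℝ}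

theorem tendsto_prod_Icc_rpow_one_div (ha : ∀ j ≤ d, 0 < a j)
    (hanti : ∀ᶠ n in atTop, AntitoneOn (g n) (Set.Icc 1 d))
    (hg₀ : ∀ᶠ n in atTop, ∀ k ∈ Set.Icc 1 d, 0 ≤ g n k)
    (hg : ∀ᶠ n in atTop, ∀ j ≤ d, etilde d j ((Icc 1 d).val.map (g n)) = a j ^ n)
    {j : ℕ} (hj : j ≤ d) :
    Tendsto (fun n : ℕ => (∏ k ∈ Icc 1 j, g n k) ^ (1 / (n : ℝ))) atTop (𝓝 (a j)) := by
  refine tendsto_rpow_one_div_of_pow_le_of_le_mul_pow (K := d.choose j) (ha j hj)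
    (by exact_mod_cast Nat.choose_pos hj) ?_ ?_
  · filter_upwards [hanti, hg₀, hg] with n hanti hg₀ hg
    exact hg j hj ▸ etilde_le_prod_Icc hanti hg₀ hj
  · filter_upwards [hg₀, hg] with n hg₀ hg
    exact hg j hj ▸ prod_Icc_le_choose_mul_etilde hg₀ hj

theorem tendsto_rpow_one_div_of_etilde_eq (ha : ∀ j ≤ d, 0 < a j)
    (hanti : ∀ᶠ n in atTop, AntitoneOn (g n) (Set.Icc 1 d))
    (hg₀ : ∀ᶠ n in atTop, ∀ k ∈ Set.Icc 1 d, 0 ≤ g n k)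
    (hg : ∀ᶠ n in atTop, ∀ j ≤ d, etilde d j ((Icc 1 d).val.map (g n)) = a j ^ n)
    {i : ℕ} (hi : i ∈ Set.Icc 1 d) :
    Tendsto (fun n : ℕ => g n i ^ (1 / (n : ℝ))) atTop (𝓝 (a i / a (i - 1))) := by
  have hi' : i - 1 ≤ d := (Nat.sub_le i 1).trans hi.2
  have hP {j : ℕ} (hj : j ≤ d) := tendsto_prod_Icc_rpow_one_div ha hanti hg₀ hg hj
  refine ((hP hi.2).div (hP hi') (ha _ hi').ne').congr' ?_
  filter_upwards [hanti, hg₀, hg] with n hanti hg₀ hg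
  have hlow {j : ℕ} (hj : j ≤ d) : 0 < ∏ k ∈ Icc 1 j, g n k :=
    (pow_pos (ha j hj) n).trans_le (hg j hj ▸ etilde_le_prod_Icc hanti hg₀ hj)
  have hsplit : ∏ k ∈ Icc 1 i, g n k = (∏ k ∈ Icc 1 (i - 1), g n k) * g n i := by
    simpa only [Nat.sub_add_cancel hi.1] using
      prod_Icc_succ_top (Nat.le_add_left 1 (i - 1)) (g n)
  rw [Pi.div_apply, ← Real.div_rpow (hlow hi.2).le (hlow hi').le, hsplit,
    mul_div_cancel_left₀ _ (hlow hi').ne']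

end Limits

section Laguerre

noncomputable def laguerreEtilde (d j : ℕ) : ℝ :=
  (d.factorial : ℝ) / (((d - j).factorial : ℝ) * (d : ℝ) ^ j)

variable {d : ℕ}

theorem laguerreEtilde_zero (d : ℕ) : laguerreEtilde d 0 = 1 := by
  simp [laguerreEtilde, Nat.factorial_ne_zero]

theorem laguerreEtilde_pos {j : ℕ} (hj : j ≤ d) : 0 < laguerreEtilde d j := by
  rcases Nat.eq_zero_or_pos d with rfl | hd
  · rw [Nat.le_zero.1 hj, laguerreEtilde_zero]
    exact one_pos
  · unfold laguerreEtilde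
    positivity

theorem laguerreEtilde_div_laguerreEtilde_sub_one {i : ℕ} (hi : i ∈ Set.Icc 1 d) :
    laguerreEtilde d i / laguerreEtilde d (i - 1) = ((d : ℝ) - i + 1) / d := by
  obtain ⟨m, rfl⟩ := Nat.exists_eq_add_of_le' hi.1
  have hm : m < d := hi.2
  have hd : (d : ℝ) ≠ 0 := Nat.cast_ne_zero.2 (by omega)
  rw [Nat.add_sub_cancel, laguerreEtilde, laguerreEtilde,
    show d - m = (d - (m + 1)) + 1 by omega, Nat.factorial_succ]
  push_cast [Nat.cast_sub hm]
  field_simp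
  ring

theorem hasNormalizedCoeffs_laguerre (d : ℕ) :
    HasNormalizedCoeffs d (X ^ d + ∑ j ∈ Icc 1 d,
      C ((-1 : ℝ) ^ j * (d.choose j : ℝ) * laguerreEtilde d j) * X ^ (d - j))
      (laguerreEtilde d) := by
  intro j hj
  rw [X_pow_add_sum_Icc_eq_sum_range _ (by simp [laguerreEtilde_zero]),
    coeff_sum_C_mul_X_pow_sub _ hj]

end Laguerre

theorem lln_laguerre_general (d : ℕ) (p : Polynomial ℝ) (Λ : Multiset ℝ)
    (lam : ℕ → ℕ → ℝ)
    (hp : p = Polynomial.X ^ d + ∑ j ∈ Finset.Icc 1 d,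
        Polynomial.C ((-1 : ℝ) ^ j * (d.choose j : ℝ) *
            ((d.factorial : ℝ) / (((d - j).factorial : ℝ) * (d : ℝ) ^ j))) *
          Polynomial.X ^ (d - j))
    (hcard : Multiset.card Λ = d)
    (hroots : p = (Λ.map fun r => Polynomial.X - Polynomial.C r).prod)
    (hlam : ∀ n, 1 ≤ n → ffmulPow d p n
        = ∏ i ∈ Finset.Icc 1 d, (Polynomial.X - Polynomial.C (lam n i)))
    (hmono : ∀ n, 1 ≤ n → ∀ a b, 1 ≤ a → a ≤ b → b ≤ d → lam n b ≤ lam n a)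
    (hnneg : ∀ n, 1 ≤ n → ∀ a, 1 ≤ a → a ≤ d → 0 ≤ lam n a) :
    p.Monic ∧ p.natDegree = d ∧
    (∀ j, 1 ≤ j → j ≤ d →
      etilde d j Λ = (d.factorial : ℝ) / (((d - j).factorial : ℝ) * (d : ℝ) ^ j)) ∧
    (∀ i, 1 ≤ i → i ≤ d →
      Filter.Tendsto (fun n : ℕ => (lam n i) ^ (1 / (n : ℝ))) Filter.atTop
        (nhds (((d : ℝ) - i + 1) / d))) := by
  have hpL : HasNormalizedCoeffs d p (laguerreEtilde d) := hp ▸ hasNormalizedCoeffs_laguerre d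
  have hpΛ : HasNormalizedCoeffs d p (fun j => etilde d j Λ) :=
    hroots ▸ hcard ▸ hasNormalizedCoeffs_multiset_prod_X_sub_C Λ
  refine ⟨hroots ▸ monic_multiset_prod_of_monic _ _ fun r _ => monic_X_sub_C r,
    by rw [hroots, natDegree_multiset_prod_X_sub_C_eq_card, hcard],
    fun j _ hj => hpΛ.unique hpL hj, fun i hi₁ hi₂ => ?_⟩
  rw [← laguerreEtilde_div_laguerreEtilde_sub_one ⟨hi₁, hi₂⟩]
  refine tendsto_rpow_one_div_of_etilde_eq (fun j => laguerreEtilde_pos) ?_ ?_ ?_ ⟨hi₁, hi₂⟩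
  · filter_upwards [eventually_ge_atTop 1] with n hn a ha b hb hab
    exact hmono n hn a b ha.1 hab hb.2
  · filter_upwards [eventually_ge_atTop 1] with n hn k hk
    exact hnneg n hn k hk.1 hk.2
  · filter_upwards [eventually_ge_atTop 1] with n hn j hj
    have hroots_n := hasNormalizedCoeffs_prod_X_sub_C (Icc 1 d) (lam n)
    rw [Nat.card_Icc, Nat.add_sub_cancel, ← hlam n hn] at hroots_n
    exact hroots_n.unique (hpL.ffmulPow n) hj

/-- LLN for the rescaled Laguerre polynomial
`p(x) = d!(−d)^{−d} L_{0,d}(dx) = x^d + Σ_{j=1}^d (−1)^j binom(d,j) (d!/((d−j)! d^j)) x^{d−j}`: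
`p` is monic of degree `d` with positive roots `Λ`, `ẽ_j(Λ) = d!/((d−j)! d^j)`, and
`(λ_i^(n))^{1/n} → (d−i+1)/d`. -/
theorem lln_laguerre (d : ℕ) (hd : 1 ≤ d) (p : Polynomial ℝ) (Λ : Multiset ℝ)
    (lam : ℕ → ℕ → ℝ)
    (hpL : p = Polynomial.C ((d.factorial : ℝ) * ((-(d : ℝ)) ^ d)⁻¹) *
        (laguerre0 d).comp (Polynomial.C (d : ℝ) * Polynomial.X))
    (hp : p = Polynomial.X ^ d + ∑ j ∈ Finset.Icc 1 d,
        Polynomial.C ((-1 : ℝ) ^ j * (d.choose j : ℝ) *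
            ((d.factorial : ℝ) / (((d - j).factorial : ℝ) * (d : ℝ) ^ j))) *
          Polynomial.X ^ (d - j))
    (hcard : Multiset.card Λ = d) (hpos : ∀ x ∈ Λ, (0 : ℝ) < x)
    (hroots : p = (Λ.map fun r => Polynomial.X - Polynomial.C r).prod)
    (hlam : ∀ n, 1 ≤ n → ffmulPow d p n
        = ∏ i ∈ Finset.Icc 1 d, (Polynomial.X - Polynomial.C (lam n i)))
    (hmono : ∀ n, 1 ≤ n → ∀ a b, 1 ≤ a → a ≤ b → b ≤ d → lam n b ≤ lam n a)
    (hnneg : ∀ n, 1 ≤ n → ∀ a, 1 ≤ a → a ≤ d → 0 ≤ lam n a) :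
    p.Monic ∧ p.natDegree = d ∧
    (∀ j, 1 ≤ j → j ≤ d →
      etilde d j Λ = (d.factorial : ℝ) / (((d - j).factorial : ℝ) * (d : ℝ) ^ j)) ∧
    (∀ i, 1 ≤ i → i ≤ d →
      Filter.Tendsto (fun n : ℕ => (lam n i) ^ (1 / (n : ℝ))) Filter.atTop
        (nhds (((d : ℝ) - i + 1) / d))) :=
  lln_laguerre_general d p Λ lam hp hcard hroots hlam hmono hnneg
end

section
/- (LLN for a polynomial with two roots.) Fix d ≥ 1 and let p(x) := x^d (x−1)^d, a monic polynomial of degree 2d whose root multiset Λ consists of d copies of 1 and d copies of 0. Then ẽ_j(Λ) = binom(d,j)/binom(2d,j) for 0 ≤ j ≤ d and ẽ_j(Λ) = 0 for d+1 ≤ j ≤ 2d; moreover, if λ_1^(n) ≥ ... ≥ λ_{2d}^(n) denote the nonnegative real roots of p^{⊠_{2d} n}, then lim_{n→∞} (λ_i^(n))^{1/n} = (d−i+1)/(2d−i+1) for 1 ≤ i ≤ d, and λ_i^(n) = 0 for d+1 ≤ i ≤ 2d. -/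
/-! For nonnegative roots `λ₁ ≥ ⋯ ≥ λ_N` one has `λ₁⋯λ_k ≤ e_k ≤ binom(N,k) λ₁⋯λ_k`, so
`λ_{k+1}` equals `e_{k+1} / e_k` up to factors that do not depend on `n`. The convolution
`⊠_D` multiplies the normalized coefficients `ẽ_j`, hence the roots of `p^{⊠n}` have
`ẽ_j = ẽ_j(Λ)^n = (binom(d,j) / binom(2d,j))^n`. Taking `n`-th roots kills the bounded
factors and gives `(λ_i^(n))^{1/n} → ẽ_i(Λ) / ẽ_{i-1}(Λ) = (d-i+1)/(2d-i+1)`, while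
`e_{d+1} = 0 < e_d` forces the roots beyond the `d`-th to vanish. -/

open Polynomial Filter

section RootBounds

variable {f : ℕ → ℝ} {N : ℕ}

theorem prod_le_prod_Icc_card_s8 (hf : AntitoneOn f (Set.Icc 1 N))
    (hf0 : ∀ j ∈ Set.Icc 1 N, 0 ≤ f j) {s : Finset ℕ} (hs : s ⊆ Finset.Icc 1 N) :
    ∏ j ∈ s, f j ≤ ∏ j ∈ Finset.Icc 1 s.card, f j := by
  induction s using Finset.induction_on_max with
  | empty => simp
  | insert a s has ih =>
    have ha : 1 ≤ a ∧ a ≤ N := by simpa using hs (Finset.mem_insert_self a s)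
    have hsN : s ⊆ Finset.Icc 1 N := (Finset.subset_insert a s).trans hs
    have hcard : s.card + 1 ≤ a := by
      have hsa : s ⊆ Finset.Ico 1 a := fun x hx =>
        Finset.mem_Ico.2 ⟨(Finset.mem_Icc.1 (hsN hx)).1, has x hx⟩
      have := Finset.card_le_card hsa
      rw [Nat.card_Ico] at this
      omega
    have hsN' : s.card + 1 ≤ N := hcard.trans ha.2
    rw [Finset.prod_insert (fun h => (has a h).false), Finset.card_insert_of_notMem
      (fun h => (has a h).false), Finset.prod_Icc_succ_top (by omega), mul_comm]
    exact mul_le_mul (ih hsN) (hf ⟨by omega, hsN'⟩ ha hcard) (hf0 a ha)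
      (Finset.prod_nonneg fun j hj => hf0 j (by simp at hj; exact ⟨hj.1, by omega⟩))

theorem prod_Icc_le_esymm_s8 (hf0 : ∀ j ∈ Set.Icc 1 N, 0 ≤ f j) {k : ℕ} (hk : k ≤ N) :
    ∏ j ∈ Finset.Icc 1 k, f j ≤ ((Finset.Icc 1 N).val.map f).esymm k := by
  rw [Finset.esymm_map_val]
  refine Finset.single_le_sum (f := fun t => ∏ j ∈ t, f j) (fun t ht => ?_) ?_
  · exact Finset.prod_nonneg fun j hj =>
      hf0 j (by simpa using (Finset.mem_powersetCard.1 ht).1 hj)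
  · exact Finset.mem_powersetCard.2 ⟨Finset.Icc_subset_Icc_right hk, by simp⟩

theorem esymm_le_choose_mul_prod_Icc_s8 (hf : AntitoneOn f (Set.Icc 1 N))
    (hf0 : ∀ j ∈ Set.Icc 1 N, 0 ≤ f j) (k : ℕ) :
    ((Finset.Icc 1 N).val.map f).esymm k ≤ N.choose k * ∏ j ∈ Finset.Icc 1 k, f j := by
  rw [Finset.esymm_map_val]
  calc ∑ t ∈ (Finset.Icc 1 N).powersetCard k, ∏ j ∈ t, f j
      ≤ ((Finset.Icc 1 N).powersetCard k).card • ∏ j ∈ Finset.Icc 1 k, f j := by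
        refine Finset.sum_le_card_nsmul _ _ _ fun t ht => ?_
        obtain ⟨hsub, hcard⟩ := Finset.mem_powersetCard.1 ht
        simpa [hcard] using prod_le_prod_Icc_card_s8 hf hf0 hsub
    _ = N.choose k * ∏ j ∈ Finset.Icc 1 k, f j := by simp [nsmul_eq_mul]

theorem esymm_succ_le_choose_mul_esymm_mul (hf : AntitoneOn f (Set.Icc 1 N))
    (hf0 : ∀ j ∈ Set.Icc 1 N, 0 ≤ f j) {k : ℕ} (hk : k + 1 ≤ N) :
    ((Finset.Icc 1 N).val.map f).esymm (k + 1)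
      ≤ N.choose (k + 1) * ((Finset.Icc 1 N).val.map f).esymm k * f (k + 1) := by
  have hfk : 0 ≤ f (k + 1) := hf0 (k + 1) ⟨by omega, hk⟩
  calc _ ≤ N.choose (k + 1) * ((∏ j ∈ Finset.Icc 1 k, f j) * f (k + 1)) := by
        rw [← Finset.prod_Icc_succ_top (by omega)]
        exact esymm_le_choose_mul_prod_Icc_s8 hf hf0 (k + 1)
    _ ≤ _ := by
        rw [mul_assoc (N.choose (k + 1) : ℝ)]
        gcongr
        exact prod_Icc_le_esymm_s8 hf0 (by omega)

theorem esymm_mul_le_choose_mul_esymm_succ (hf : AntitoneOn f (Set.Icc 1 N))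
    (hf0 : ∀ j ∈ Set.Icc 1 N, 0 ≤ f j) {k : ℕ} (hk : k + 1 ≤ N) :
    ((Finset.Icc 1 N).val.map f).esymm k * f (k + 1)
      ≤ N.choose k * ((Finset.Icc 1 N).val.map f).esymm (k + 1) := by
  have hfk : 0 ≤ f (k + 1) := hf0 (k + 1) ⟨by omega, hk⟩
  calc _ ≤ N.choose k * (∏ j ∈ Finset.Icc 1 k, f j) * f (k + 1) := by
        gcongr
        exact esymm_le_choose_mul_prod_Icc_s8 hf hf0 k
    _ ≤ _ := by
        rw [mul_assoc, ← Finset.prod_Icc_succ_top (by omega)]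
        gcongr
        exact prod_Icc_le_esymm_s8 hf0 hk

theorem eq_zero_of_esymm_succ_eq_zero (hf : AntitoneOn f (Set.Icc 1 N))
    (hf0 : ∀ j ∈ Set.Icc 1 N, 0 ≤ f j) {k : ℕ}
    (hk : 0 < ((Finset.Icc 1 N).val.map f).esymm k)
    (hk1 : ((Finset.Icc 1 N).val.map f).esymm (k + 1) = 0) {i : ℕ} (hki : k + 1 ≤ i)
    (hiN : i ≤ N) : f i = 0 := by
  have hle := esymm_mul_le_choose_mul_esymm_succ hf hf0 (hki.trans hiN)
  rw [hk1, mul_zero] at hle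
  have hfk : f (k + 1) ≤ 0 := nonpos_of_mul_nonpos_right hle hk
  exact le_antisymm ((hf ⟨by omega, by omega⟩ ⟨by omega, hiN⟩ hki).trans hfk)
    (hf0 i ⟨by omega, hiN⟩)

end RootBounds

theorem tendsto_const_rpow_one_div_nat {c : ℝ} (hc : c ≠ 0) :
    Tendsto (fun n : ℕ => c ^ (1 / (n : ℝ))) atTop (nhds 1) := by
  simpa [Function.comp_def] using
    (Real.continuousAt_const_rpow hc).tendsto.comp tendsto_one_div_atTop_nhds_zero_nat

theorem tendsto_rpow_one_div_of_le_of_le {x : ℕ → ℝ} {ρ c₁ c₂ : ℝ} (hρ : 0 ≤ ρ)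
    (hc₁ : 0 < c₁) (hc₂ : 0 < c₂) (hlow : ∀ᶠ n in atTop, c₁ * ρ ^ n ≤ x n)
    (hupp : ∀ᶠ n in atTop, x n ≤ c₂ * ρ ^ n) :
    Tendsto (fun n : ℕ => x n ^ (1 / (n : ℝ))) atTop (nhds ρ) := by
  have hlim (c : ℝ) (hc : 0 < c) :
      Tendsto (fun n : ℕ => (c * ρ ^ n) ^ (1 / (n : ℝ))) atTop (nhds ρ) := by
    have h := (tendsto_const_rpow_one_div_nat hc.ne').mul_const ρ
    rw [one_mul] at h
    refine h.congr' ?_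
    filter_upwards [eventually_ne_atTop 0] with n hn
    rw [Real.mul_rpow hc.le (by positivity), one_div, Real.pow_rpow_inv_natCast hρ hn]
  refine tendsto_of_tendsto_of_tendsto_of_le_of_le' (hlim c₁ hc₁) (hlim c₂ hc₂) ?_ ?_
  · filter_upwards [hlow] with n hn
    exact Real.rpow_le_rpow (by positivity) hn (by positivity)
  · filter_upwards [hlow, hupp] with n hl hu
    exact Real.rpow_le_rpow ((by positivity : 0 ≤ c₁ * ρ ^ n).trans hl) hu (by positivity)

theorem tendsto_rpow_one_div_of_esymm_eq {r : ℕ → ℕ → ℝ} {N k : ℕ} (hk : k + 1 ≤ N)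
    (hr : ∀ᶠ n in atTop, AntitoneOn (r n) (Set.Icc 1 N))
    (hr0 : ∀ᶠ n in atTop, ∀ j ∈ Set.Icc 1 N, 0 ≤ r n j) {a b s t : ℝ} (ha : 0 < a)
    (hb : 0 < b) (hs : 0 ≤ s) (ht : 0 < t)
    (hek : ∀ᶠ n in atTop, ((Finset.Icc 1 N).val.map (r n)).esymm k = b * t ^ n)
    (hek1 : ∀ᶠ n in atTop, ((Finset.Icc 1 N).val.map (r n)).esymm (k + 1) = a * s ^ n) :
    Tendsto (fun n : ℕ => r n (k + 1) ^ (1 / (n : ℝ))) atTop (nhds (s / t)) := by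
  have hC : (0 : ℝ) < N.choose (k + 1) := by exact_mod_cast Nat.choose_pos hk
  have hC' : (0 : ℝ) < N.choose k := by exact_mod_cast Nat.choose_pos (by omega)
  refine tendsto_rpow_one_div_of_le_of_le (div_nonneg hs ht.le)
    (c₁ := a / (N.choose (k + 1) * b)) (c₂ := N.choose k * a / b) (by positivity)
    (by positivity) ?_ ?_
  · filter_upwards [hr, hr0, hek, hek1] with n hrn hrn0 he he1
    have h := esymm_succ_le_choose_mul_esymm_mul hrn hrn0 hk
    rw [he, he1] at h
    have : a / (N.choose (k + 1) * b) * (s / t) ^ n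
        = a * s ^ n / (N.choose (k + 1) * (b * t ^ n)) := by
      rw [div_pow]; field_simp
    rw [this, div_le_iff₀ (by positivity)]
    linarith
  · filter_upwards [hr, hr0, hek, hek1] with n hrn hrn0 he he1
    have h := esymm_mul_le_choose_mul_esymm_succ hrn hrn0 hk
    rw [he, he1] at h
    have : N.choose k * a / b * (s / t) ^ n = N.choose k * (a * s ^ n) / (b * t ^ n) := by
      rw [div_pow]; field_simp
    rw [this, le_div_iff₀ (by positivity)]
    linarith

theorem coeff_X_sub_one_pow_sub {R : Type*} [CommRing R] {D j : ℕ} (hj : j ≤ D) :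
    (((X : R[X]) - 1) ^ D).coeff (D - j) = (-1) ^ j * D.choose j := by
  rw [← C_1, sub_eq_add_neg, ← C_neg, coeff_X_add_C_pow, Nat.sub_sub_self hj,
    Nat.choose_symm hj]

/-- `p_j / binom(D, j)` in the notation `p = Σ (-1)^j p_j X^{D-j}` of `ffmul`. -/
noncomputable def normalizedCoeff (D : ℕ) (p : ℝ[X]) (j : ℕ) : ℝ :=
  (-1) ^ j * p.coeff (D - j) / D.choose j

section normalizedCoeff

variable {D j : ℕ}

theorem normalizedCoeff_X_sub_one_pow (hj : j ≤ D) :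
    normalizedCoeff D ((X - 1) ^ D) j = 1 := by
  have : (D.choose j : ℝ) ≠ 0 := by exact_mod_cast (Nat.choose_pos hj).ne'
  rw [normalizedCoeff, coeff_X_sub_one_pow_sub hj, ← mul_assoc, ← mul_pow]
  simp [this]

theorem coeff_ffmul_sub (p q : ℝ[X]) (hj : j ≤ D) :
    (ffmul D p q).coeff (D - j) = (-1) ^ j * p.coeff (D - j) * q.coeff (D - j) / D.choose j := by
  rw [ffmul, finsetSum_coeff, Finset.sum_eq_single j]
  · simp [coeff_C_mul, coeff_X_pow]
  · intro i hi hij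
    have : D - j ≠ D - i := by rw [Finset.mem_range] at hi; omega
    simp [coeff_C_mul, coeff_X_pow, this]
  · intro h
    exact absurd (Finset.mem_range.2 (by omega)) h

theorem normalizedCoeff_ffmul (p q : ℝ[X]) (hj : j ≤ D) :
    normalizedCoeff D (ffmul D p q) j = normalizedCoeff D p j * normalizedCoeff D q j := by
  have : (D.choose j : ℝ) ≠ 0 := by exact_mod_cast (Nat.choose_pos hj).ne'
  simp only [normalizedCoeff, coeff_ffmul_sub p q hj]
  field_simp

theorem normalizedCoeff_ffmulPow (p : ℝ[X]) (n : ℕ) (hj : j ≤ D) :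
    normalizedCoeff D (ffmulPow D p n) j = normalizedCoeff D p j ^ n := by
  induction n with
  | zero => exact normalizedCoeff_X_sub_one_pow hj
  | succ n ih => rw [ffmulPow, normalizedCoeff_ffmul _ _ hj, ih, pow_succ']

theorem normalizedCoeff_prod_X_sub_C (Λ : Multiset ℝ) (hj : j ≤ Multiset.card Λ) :
    normalizedCoeff (Multiset.card Λ) (Λ.map (X - C ·)).prod j = etilde (Multiset.card Λ) j Λ := by
  rw [normalizedCoeff, Multiset.prod_X_sub_C_coeff Λ (Nat.sub_le _ _), Nat.sub_sub_self hj,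
    ← mul_assoc, ← mul_pow, neg_one_mul, neg_neg, one_pow, one_mul, etilde]

theorem etilde_of_ffmulPow_eq_prod {Λ R : Multiset ℝ} (hΛ : Multiset.card Λ = D)
    (hR : Multiset.card R = D) {n : ℕ}
    (hpow : ffmulPow D (Λ.map (X - C ·)).prod n = (R.map (X - C ·)).prod) (hj : j ≤ D) :
    etilde D j R = etilde D j Λ ^ n := by
  subst hΛ
  rw [← hR, ← normalizedCoeff_prod_X_sub_C R (hR ▸ hj), hR, ← hpow,
    normalizedCoeff_ffmulPow _ _ hj, normalizedCoeff_prod_X_sub_C Λ hj]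

end normalizedCoeff

theorem prod_X_sub_C_replicate_one_add_replicate_zero (d : ℕ) :
    ((Multiset.replicate d (1 : ℝ) + Multiset.replicate d 0).map (X - C ·)).prod
      = X ^ d * (X - 1) ^ d := by
  simp [Multiset.map_replicate, mul_comm]

theorem coeff_X_pow_mul_X_sub_one_pow {d j : ℕ} (hj : j ≤ 2 * d) :
    ((X : ℝ[X]) ^ d * (X - 1) ^ d).coeff (2 * d - j) = (-1 : ℝ) ^ j * d.choose j := by
  rw [coeff_X_pow_mul']
  split_ifs with h
  · rw [show 2 * d - j - d = d - j by omega, coeff_X_sub_one_pow_sub (by omega)]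
  · simp [Nat.choose_eq_zero_of_lt (show d < j by omega)]

theorem etilde_replicate_one_add_replicate_zero {d j : ℕ} (hj : j ≤ 2 * d) :
    etilde (2 * d) j (Multiset.replicate d 1 + Multiset.replicate d 0)
      = d.choose j / (2 * d).choose j := by
  have hcard : Multiset.card (Multiset.replicate d (1 : ℝ) + Multiset.replicate d 0) = 2 * d := by
    simp [two_mul]
  have h := normalizedCoeff_prod_X_sub_C (Multiset.replicate d (1 : ℝ) + Multiset.replicate d 0)
    (hcard ▸ hj)
  rw [hcard, prod_X_sub_C_replicate_one_add_replicate_zero, normalizedCoeff,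
    coeff_X_pow_mul_X_sub_one_pow hj, ← mul_assoc, ← mul_pow, neg_one_mul, neg_neg, one_pow,
    one_mul] at h
  exact h.symm

theorem cast_choose_succ_mul {n k : ℕ} (hk : k ≤ n) :
    (n.choose (k + 1) : ℝ) * (k + 1) = n.choose k * ((n : ℝ) - k) := by
  rw [← Nat.cast_sub hk]
  exact_mod_cast Nat.choose_succ_right_eq n k

theorem choose_div_choose_two_mul_ratio {d k : ℕ} (hk : k < d) :
    (d.choose (k + 1) / (2 * d).choose (k + 1) : ℝ) / (d.choose k / (2 * d).choose k)
      = ((d : ℝ) - k) / (2 * d - k) := by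
  have hk' : (k : ℝ) < d := by exact_mod_cast hk
  have h₁ : (d.choose (k + 1) : ℝ) = d.choose k * (d - k) / (k + 1) := by
    rw [eq_div_iff (by positivity), cast_choose_succ_mul hk.le]
  have h₂ : ((2 * d).choose (k + 1) : ℝ) = (2 * d).choose k * (2 * d - k) / (k + 1) := by
    rw [eq_div_iff (by positivity), cast_choose_succ_mul (by omega)]
    push_cast; ring
  have h2dk : (0 : ℝ) < 2 * d - k := by linarith
  have hc : (0 : ℝ) < d.choose k := by exact_mod_cast Nat.choose_pos hk.le
  have hc₂ : (0 : ℝ) < (2 * d).choose k := by exact_mod_cast Nat.choose_pos (by omega)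
  rw [h₁, h₂]
  field_simp

theorem esymm_eq_of_ffmulPow_X_pow_mul_X_sub_one_pow_eq_prod {d n j : ℕ} {r : ℕ → ℝ}
    (hroots : ffmulPow (2 * d) (X ^ d * (X - 1) ^ d) n
      = ∏ i ∈ Finset.Icc 1 (2 * d), (X - C (r i)))
    (hj : j ≤ 2 * d) :
    ((Finset.Icc 1 (2 * d)).val.map r).esymm j
      = (2 * d).choose j * (d.choose j / (2 * d).choose j : ℝ) ^ n := by
  have hC : ((2 * d).choose j : ℝ) ≠ 0 := by exact_mod_cast (Nat.choose_pos hj).ne'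
  have h := etilde_of_ffmulPow_eq_prod (Λ := Multiset.replicate d 1 + Multiset.replicate d 0)
    (R := (Finset.Icc 1 (2 * d)).val.map r) (by simp [two_mul]) (by simp) (by
      rw [prod_X_sub_C_replicate_one_add_replicate_zero, hroots, Multiset.map_map,
        Finset.prod_map_val]
      rfl) hj
  rw [etilde_replicate_one_add_replicate_zero hj, etilde, div_eq_iff hC] at h
  rw [h, mul_comm]

/-- LLN for `p(x) = x^d (x−1)^d`:
`ẽ_j(Λ) = binom(d,j)/binom(2d,j)` for `j ≤ d`, `ẽ_j(Λ) = 0` for `j > d`,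
`(λ_i^(n))^{1/n} → (d−i+1)/(2d−i+1)` for `1 ≤ i ≤ d`, and `λ_i^(n) = 0` for `i > d`. -/
theorem lln_two_roots (d : ℕ) (hd : 1 ≤ d) (p : Polynomial ℝ) (Λ : Multiset ℝ)
    (lam : ℕ → ℕ → ℝ)
    (hp : p = Polynomial.X ^ d * (Polynomial.X - 1) ^ d)
    (hΛ : Λ = Multiset.replicate d (1 : ℝ) + Multiset.replicate d (0 : ℝ))
    (hlam : ∀ n, 1 ≤ n → ffmulPow (2 * d) p n
        = ∏ i ∈ Finset.Icc 1 (2 * d), (Polynomial.X - Polynomial.C (lam n i)))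
    (hmono : ∀ n, 1 ≤ n → ∀ a b, 1 ≤ a → a ≤ b → b ≤ 2 * d → lam n b ≤ lam n a)
    (hnneg : ∀ n, 1 ≤ n → ∀ a, 1 ≤ a → a ≤ 2 * d → 0 ≤ lam n a) :
    (∀ j ≤ d, etilde (2 * d) j Λ = (d.choose j : ℝ) / ((2 * d).choose j : ℝ)) ∧
    (∀ j, d + 1 ≤ j → j ≤ 2 * d → etilde (2 * d) j Λ = 0) ∧
    (∀ i, 1 ≤ i → i ≤ d →
      Filter.Tendsto (fun n : ℕ => (lam n i) ^ (1 / (n : ℝ))) Filter.atTop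
        (nhds (((d : ℝ) - i + 1) / (2 * (d : ℝ) - i + 1)))) ∧
    (∀ i, d + 1 ≤ i → i ≤ 2 * d → ∀ n, 1 ≤ n → lam n i = 0) := by
  subst hp hΛ
  have hanti : ∀ n, 1 ≤ n → AntitoneOn (lam n) (Set.Icc 1 (2 * d)) :=
    fun n hn a ha b hb hab => hmono n hn a b ha.1 hab hb.2
  have hpos : ∀ n, 1 ≤ n → ∀ j ∈ Set.Icc 1 (2 * d), 0 ≤ lam n j :=
    fun n hn j hj => hnneg n hn j hj.1 hj.2
  have hesymm n (hn : 1 ≤ n) j (hj : j ≤ 2 * d) :=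
    esymm_eq_of_ffmulPow_X_pow_mul_X_sub_one_pow_eq_prod (hlam n hn) hj
  have hchoose {m j : ℕ} (h : j ≤ m) : (0 : ℝ) < m.choose j := by exact_mod_cast Nat.choose_pos h
  refine ⟨fun j hj => etilde_replicate_one_add_replicate_zero (by omega), fun j hj hj' => ?_,
    fun i hi hid => ?_, fun i hi hi' n hn => ?_⟩
  · rw [etilde_replicate_one_add_replicate_zero hj', Nat.choose_eq_zero_of_lt (by omega),
      Nat.cast_zero, zero_div]
  · obtain ⟨k, rfl⟩ : ∃ k, i = k + 1 := ⟨i - 1, by omega⟩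
    have hev : ∀ᶠ n in atTop, 1 ≤ n := eventually_ge_atTop 1
    convert tendsto_rpow_one_div_of_esymm_eq (by omega) (hev.mono hanti) (hev.mono hpos)
      (hchoose (by omega)) (hchoose (by omega)) (by positivity)
      (div_pos (hchoose (by omega)) (hchoose (by omega)))
      (hev.mono fun n hn => hesymm n hn k (by omega))
      (hev.mono fun n hn => hesymm n hn (k + 1) (by omega)) using 2
    rw [choose_div_choose_two_mul_ratio (by omega)]
    push_cast
    ring
  · refine eq_zero_of_esymm_succ_eq_zero (hanti n hn) (hpos n hn) (k := d) ?_ ?_ hi hi'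
    · rw [hesymm n hn d (by omega), Nat.choose_self]
      have := hchoose (m := 2 * d) (j := d) (by omega)
      positivity
    · rw [hesymm n hn (d + 1) (by omega), Nat.choose_eq_zero_of_lt d.lt_succ_self]
      simp [zero_pow (by omega : n ≠ 0)]
end
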